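/- Let G be a graph and let A, B ⊆ V(G) be vertex subsets all of whose connected components have the same size s (so m(A) = m(B) is a constant multiset with every element equal to s). If the CC-Piran graph Π^cc(A, B) contains no induced cycle of even length at least 4 (is even-hole-free), then A and B are reconfigurable under the component jumping rule CJ; moreover, there exists a reconfiguration sequence from A to B under CJ of length exactly |C(A) \ C(B)|, which is shortest possible. -/

import Mathlib

open scoped Classical

noncomputable section

/-- `U` induces a connected subgraph of `G`. -/
def IsConnSub {V : Type*} (G : SimpleGraph V) (U : Finset V) : Prop :=
  (G.induce (U : Set V)).Connected

/-- The set of connected components of a vertex subset `U`: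
maximal subsets of `U` inducing connected subgraphs. -/
def comps {V : Type*} [Fintype V] [DecidableEq V] (G : SimpleGraph V) (U : Finset V) :
    Finset (Finset V) :=
  Finset.univ.filter (fun C => C ⊆ U ∧ IsConnSub G C ∧
    ∀ D : Finset V, C ⊆ D → D ⊆ U → IsConnSub G D → D = C)

/-- The CC-multiset of `U`: the multiset of sizes of connected components of `U`. -/
def ccMultiset {V : Type*} [Fintype V] [DecidableEq V] (G : SimpleGraph V) (U : Finset V) :
    Multiset ℕ :=
  (comps G U).val.map Finset.card

/-- Adjacency under component jumping (CJ). -/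
def adjCJ {V : Type*} [Fintype V] [DecidableEq V] (G : SimpleGraph V) (U U' : Finset V) : Prop :=
  ccMultiset G U = ccMultiset G U' ∧
  (comps G U \ comps G U').card = 1 ∧ (comps G U' \ comps G U).card = 1

/-- Adjacency under component sliding (CS). -/
def adjCS {V : Type*} [Fintype V] [DecidableEq V] (G : SimpleGraph V) (U U' : Finset V) : Prop :=
  adjCJ G U U' ∧
  ∀ C ∈ comps G U \ comps G U', ∀ C' ∈ comps G U' \ comps G U, IsConnSub G (C ∪ C')

/-- Adjacency under CS1 (component sliding by one vertex). -/
def adjCS1 {V : Type*} [Fintype V] [DecidableEq V] (G : SimpleGraph V) (U U' : Finset V) : Prop :=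
  adjCS G U U' ∧
  ∀ C ∈ comps G U \ comps G U', ∀ C' ∈ comps G U' \ comps G U,
    (C \ C').card = 1 ∧ (C' \ C).card = 1

/-- Adjacency under token jumping (TJ). -/
def adjTJ {V : Type*} [DecidableEq V] (G : SimpleGraph V) (U U' : Finset V) : Prop :=
  (U \ U').card = 1 ∧ (U' \ U).card = 1

/-- `A` and `B` are reconfigurable under rule `R` keeping the CC-multiset equal to `M`. -/
def Reconf {V : Type*} [Fintype V] [DecidableEq V] (G : SimpleGraph V) (M : Multiset ℕ)
    (R : Finset V → Finset V → Prop) (A B : Finset V) : Prop :=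
  ∃ (ℓ : ℕ) (W : ℕ → Finset V), W 0 = A ∧ W ℓ = B ∧
    (∀ i ≤ ℓ, ccMultiset G (W i) = M) ∧ ∀ i < ℓ, R (W i) (W (i + 1))

end

/-- The vertex set of the CC-Piran graph: connected components of `A` that are not
components of `B`, together with components of `B` that are not components of `A`. -/
noncomputable def ccPiranVerts {V : Type*} [Fintype V] [DecidableEq V] (G : SimpleGraph V)
    (A B : Finset V) : Finset (Finset V) :=
  (comps G A \ comps G B) ∪ (comps G B \ comps G A)

/-- The CC-Piran graph `Π^cc(A, B)`: vertices are the components in the symmetric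
difference of `C(A)` and `C(B)`; a component of `C(A) \ C(B)` is joined to a component
of `C(B) \ C(A)` whenever the two touch. -/
noncomputable def ccPiran {V : Type*} [Fintype V] [DecidableEq V] (G : SimpleGraph V) (A B : Finset V) :
    SimpleGraph {C : Finset V // C ∈ ccPiranVerts G A B} where
  Adj C D :=
    ((C.1 ∈ comps G A \ comps G B ∧ D.1 ∈ comps G B \ comps G A) ∨
     (D.1 ∈ comps G A \ comps G B ∧ C.1 ∈ comps G B \ comps G A)) ∧
    IsConnSub G (C.1 ∪ D.1)
  symm := by
    constructor
    rintro C D ⟨h1, h2⟩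
    exact ⟨h1.symm, by rwa [Finset.union_comm]⟩
  loopless := by
    constructor
    rintro C ⟨h1 | h1, _⟩ <;>
      exact (Finset.mem_sdiff.mp h1.1).2 (Finset.mem_sdiff.mp h1.2).1

/-!
Jump the components of `C(A) \ C(B)` one at a time onto those of `C(B) \ C(A)`. A missing
component `b` of `B` may replace a current component `a` in one CJ step as soon as `b` touches
no other current component; since distinct components of `B` never touch, it is enough that `b`
touch at most one of the components of `A` not yet replaced. The graph `Π^cc(A, B)` is
bipartite, so a shortest cycle in it would be an induced even cycle; being even-hole-free, it
is therefore a forest, and peeling off leaves shows that whenever at least as many components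
of `B` as of `A` remain, one of those of `B` touches at most one of those of `A`. Conversely,
every CJ step removes at most one component of `A`, which gives the lower bound.
-/

open Finset

lemma exists_mem_forall_ne_not_of_card_filter_le_one {α : Type*} {s : Finset α} {p : α → Prop}
    (hs : s.Nonempty) (h : #{x ∈ s | p x} ≤ 1) : ∃ a ∈ s, ∀ x ∈ s, x ≠ a → ¬ p x := by
  by_cases hp : ∃ a ∈ s, p a
  · obtain ⟨a, has, hpa⟩ := hp
    exact ⟨a, has, fun x hxs hxa hpx =>
      hxa (card_le_one.1 h x (mem_filter.2 ⟨hxs, hpx⟩) a (mem_filter.2 ⟨has, hpa⟩))⟩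
  · push Not at hp
    obtain ⟨a, has⟩ := hs
    exact ⟨a, has, fun x hxs _ => hp x hxs⟩

lemma exists_seq_cons {α : Type*} {R : α → α → Prop} {x y z : α} {n : ℕ} (hxy : R x y)
    (h : ∃ W : ℕ → α, W 0 = y ∧ W n = z ∧ ∀ i < n, R (W i) (W (i + 1))) :
    ∃ W : ℕ → α, W 0 = x ∧ W (n + 1) = z ∧ ∀ i < n + 1, R (W i) (W (i + 1)) := by
  obtain ⟨W, hW0, hWn, hW⟩ := h
  refine ⟨fun | 0 => x | i + 1 => W i, rfl, hWn, fun i hi => ?_⟩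
  cases i with
  | zero =>
    show R x (W 0)
    rwa [hW0]
  | succ i => exact hW i (by omega)

namespace SimpleGraph

variable {X : Type*} {P : SimpleGraph X}

def EvenHoleFree (P : SimpleGraph X) : Prop :=
  ∀ n, 4 ≤ n → Even n → IsEmpty (cycleGraph n ↪g P)

structure IsCyclicSeq (P : SimpleGraph X) (n : ℕ) (c : ℕ → X) : Prop where
  adj : ∀ i, P.Adj (c i) (c (i + 1))
  periodic : Function.Periodic c n
  injOn : Set.InjOn c (Set.Iio n)

lemma isCyclicSeq_of_path {y : ℕ → X} {m : ℕ} (hm : 0 < m)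
    (hadj : ∀ k, k + 1 < m → P.Adj (y k) (y (k + 1))) (hclose : P.Adj (y (m - 1)) (y 0))
    (hinj : Set.InjOn y (Set.Iio m)) : P.IsCyclicSeq m (fun k => y (k % m)) where
  adj i := by
    have hm1 : 1 < m := by
      by_contra h
      obtain rfl : m = 1 := by omega
      exact hclose.ne rfl
    have hi : i % m < m := Nat.mod_lt i hm
    rw [Nat.add_mod, Nat.mod_eq_of_lt hm1]
    rcases (show i % m + 1 < m ∨ i % m + 1 = m by omega) with h | h
    · rw [Nat.mod_eq_of_lt h]
      exact hadj _ h
    · rw [h, Nat.mod_self, show i % m = m - 1 by omega]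
      exact hclose
  periodic k := by simp only [Nat.add_mod_right]
  injOn k hk l hl h := by
    simp only [Set.mem_Iio] at hk hl
    simp only [Nat.mod_eq_of_lt hk, Nat.mod_eq_of_lt hl] at h
    exact hinj hk hl h

lemma exists_isCyclicSeq_of_not_injective {x : ℕ → X} (hadj : ∀ k, P.Adj (x k) (x (k + 1)))
    (hback : ∀ k, x (k + 2) ≠ x k) (hx : ¬ x.Injective) :
    ∃ n c, 3 ≤ n ∧ P.IsCyclicSeq n c := by
  have hrep : ∃ j, ∃ i < j, x i = x j := by
    simp only [Function.Injective, not_forall] at hx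
    obtain ⟨i, j, hij, hne⟩ := hx
    rcases Nat.lt_or_gt_of_ne hne with h | h
    · exact ⟨j, i, h, hij⟩
    · exact ⟨i, j, h, hij.symm⟩
  obtain ⟨i, hij, hxij⟩ := Nat.find_spec hrep
  set j := Nat.find hrep
  have hm1 : j - i ≠ 1 := fun h => (hadj i).ne (by rwa [show i + 1 = j by omega])
  have hm2 : j - i ≠ 2 := fun h => hback i (by rw [show i + 2 = j by omega, hxij])
  refine ⟨j - i, _, by omega, isCyclicSeq_of_path (y := fun k => x (i + k)) (by omega)
    (fun k _ => hadj (i + k)) ?_ ?_⟩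
  · simpa [show i + (j - i - 1) + 1 = j by omega, ← hxij] using hadj (i + (j - i - 1))
  · intro k hk l hl hkl
    simp only [Set.mem_Iio] at hk hl
    by_contra hne
    rcases Nat.lt_or_gt_of_ne hne with h | h
    · exact Nat.find_min hrep (show i + l < j by omega) ⟨i + k, by omega, hkl⟩
    · exact Nat.find_min hrep (show i + k < j by omega) ⟨i + l, by omega, hkl.symm⟩

lemma exists_nonbacktracking_walk {W : Finset X} (hW : W.Nonempty)
    (hnb : ∀ x ∈ W, ∀ p, ∃ y ∈ W, y ≠ p ∧ P.Adj x y) :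
    ∃ x : ℕ → W, (∀ k, P.Adj (x k) (x (k + 1))) ∧ ∀ k, x (k + 2) ≠ x k := by
  choose nb hnbW hnbp hnbadj using hnb
  let next (q : W × W) : W × W := (q.2, ⟨nb q.2 q.2.2 q.1, hnbW _ _ _⟩)
  obtain ⟨x₀, hx₀⟩ := hW
  let start : W × W := (⟨x₀, hx₀⟩, ⟨nb x₀ hx₀ x₀, hnbW _ _ _⟩)
  have hstep (k : ℕ) : next^[k + 1] start = next (next^[k] start) :=
    Function.iterate_succ_apply' _ _ _
  refine ⟨fun k => (next^[k] start).1, fun k => ?_, fun k => ?_⟩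
  · cases k with
    | zero => exact hnbadj _ _ _
    | succ k => simpa only [hstep] using hnbadj _ _ _
  · simp only [hstep, ne_eq, Subtype.ext_iff]
    exact hnbp _ _ _

lemma IsCyclicSeq.even {n : ℕ} {c : ℕ → X} (hc : P.IsCyclicSeq n c) (col : P.Coloring Bool) :
    Even n := by
  have hcol (k : ℕ) : col (c k) = col (c 0) ↔ Even k := by
    induction k with
    | zero => simp
    | succ k ih =>
      have h := col.valid (hc.adj k)
      rw [Nat.even_add_one, ← ih]
      revert h
      generalize col (c k) = a, col (c (k + 1)) = b, col (c 0) = d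
      cases a <;> cases b <;> cases d <;> decide
  simpa [hc.periodic.eq] using hcol n

lemma cycleGraph_adj_iff_val {n : ℕ} (hn : 2 ≤ n) {u v : Fin n} :
    (cycleGraph n).Adj u v ↔ u.val = v.val + 1 ∨ v.val = u.val + 1 ∨
      (u.val = 0 ∧ v.val = n - 1) ∨ (v.val = 0 ∧ u.val = n - 1) := by
  have hu := u.isLt
  have hv := v.isLt
  rw [cycleGraph_adj']
  rcases lt_trichotomy u v with h | rfl | h
  · rw [Fin.coe_sub_iff_lt.mpr h, Fin.coe_sub_iff_le.mpr h.le]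
    omega
  · rw [Fin.coe_sub_iff_le.mpr le_rfl]
    omega
  · rw [Fin.coe_sub_iff_le.mpr h.le, Fin.coe_sub_iff_lt.mpr h]
    omega

lemma IsCyclicSeq.nonempty_embedding {n : ℕ} {c : ℕ → X} (hc : P.IsCyclicSeq n c)
    (hn : 2 ≤ n)
    (hchord : ∀ i j, j < n → i < j → P.Adj (c i) (c j) → j = i + 1 ∨ (i = 0 ∧ j = n - 1)) :
    Nonempty (cycleGraph n ↪g P) := by
  have hwrap : P.Adj (c (n - 1)) (c 0) := by
    simpa [show n - 1 + 1 = n by omega, hc.periodic.eq] using hc.adj (n - 1)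
  refine ⟨⟨⟨fun v => c v, fun u v h => Fin.ext (hc.injOn u.isLt v.isLt h)⟩, ?_⟩⟩
  intro u v
  change P.Adj (c u) (c v) ↔ _
  rw [cycleGraph_adj_iff_val hn]
  constructor
  · intro h
    rcases lt_trichotomy u.val v.val with huv | huv | huv
    · have := hchord _ _ v.isLt huv h
      omega
    · exact absurd (congrArg c huv) h.ne
    · have := hchord _ _ u.isLt huv h.symm
      omega
  · rintro (h | h | ⟨hu, hv⟩ | ⟨hv, hu⟩)
    · rw [h]
      exact (hc.adj v).symm
    · rw [h]
      exact hc.adj u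
    · rw [hu, hv]
      exact hwrap.symm
    · rw [hu, hv]
      exact hwrap

lemma exists_chordless_isCyclicSeq (h : ∃ n c, 3 ≤ n ∧ P.IsCyclicSeq n c) :
    ∃ n c, 3 ≤ n ∧ P.IsCyclicSeq n c ∧
      ∀ i j, j < n → i < j → P.Adj (c i) (c j) → j = i + 1 ∨ (i = 0 ∧ j = n - 1) := by
  obtain ⟨c, hn, hc⟩ := Nat.find_spec h
  refine ⟨Nat.find h, c, hn, hc, fun i j hj hij hadj => ?_⟩
  by_contra hchord
  -- the chord `c i – c j` closes the arc `c i, …, c j` into a strictly shorter cycle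
  refine Nat.find_min h (m := j - i + 1) (by omega) ⟨_, by omega,
    isCyclicSeq_of_path (y := fun k => c (i + k)) (by omega) (fun k _ => hc.adj (i + k)) ?_ ?_⟩
  · rw [show i + (j - i + 1 - 1) = j by omega, Nat.add_zero]
    exact hadj.symm
  · intro k hk l hl hkl
    simp only [Set.mem_Iio] at hk hl
    have := hc.injOn (show i + k < Nat.find h by omega) (show i + l < Nat.find h by omega) hkl
    omega

lemma EvenHoleFree.exists_card_adj_le_one (hP : P.EvenHoleFree) (col : P.Coloring Bool)
    {W : Finset X} (hW : W.Nonempty) : ∃ x ∈ W, #{y ∈ W | P.Adj x y} ≤ 1 := by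
  by_contra! hdeg
  have hnb : ∀ x ∈ W, ∀ p, ∃ y ∈ W, y ≠ p ∧ P.Adj x y := by
    intro x hx p
    obtain ⟨y, hy, hyp⟩ := exists_mem_ne (hdeg x hx) p
    rw [mem_filter] at hy
    exact ⟨y, hy.1, hyp, hy.2⟩
  obtain ⟨x, hadj, hback⟩ := exists_nonbacktracking_walk hW hnb
  have hx : ¬ (Subtype.val ∘ x).Injective := fun hinj =>
    not_injective_infinite_finite x hinj.of_comp
  obtain ⟨n, c, hn, hc, hchord⟩ := exists_chordless_isCyclicSeq
    (exists_isCyclicSeq_of_not_injective hadj (fun k h => hback k (Subtype.ext h)) hx)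
  have heven := hc.even col
  have hn4 : 4 ≤ n := by
    obtain ⟨t, rfl⟩ := heven
    omega
  exact (hP n hn4 heven).false (hc.nonempty_embedding (by omega) hchord).some

lemma exists_mem_card_adj_le_one_of_card_le
    (hdeg : ∀ W : Finset X, W.Nonempty → ∃ x ∈ W, #{y ∈ W | P.Adj x y} ≤ 1) :
    ∀ {S T : Finset X}, #S ≤ #T → T.Nonempty → ∃ t ∈ T, #{s ∈ S | P.Adj t s} ≤ 1 := by
  intro S
  induction S using Finset.strongInduction with
  | H S ih =>
  intro T hST hT
  obtain ⟨x, hxW, hx⟩ := hdeg (S ∪ T) (hT.mono subset_union_right)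
  by_cases hxT : x ∈ T
  · exact ⟨x, hxT, (card_le_card (filter_subset_filter _ subset_union_left)).trans hx⟩
  have hxS : x ∈ S := by simpa [hxT] using hxW
  set T' := T.filter (fun t => ¬ P.Adj x t)
  have hT' : #T ≤ #T' + 1 := by
    have hsplit : T ⊆ {t ∈ T | P.Adj x t} ∪ T' := fun t ht => by
      by_cases h : P.Adj x t <;> simp [T', ht, h]
    have := (card_le_card hsplit).trans (card_union_le _ _)
    have : #{t ∈ T | P.Adj x t} ≤ 1 :=
      (card_le_card (filter_subset_filter _ subset_union_right)).trans hx
    omega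
  rcases T'.eq_empty_or_nonempty with hT'e | hT'ne
  · obtain ⟨t, ht⟩ := hT
    rw [hT'e, card_empty] at hT'
    exact ⟨t, ht, (card_filter_le _ _).trans (by omega)⟩
  · obtain ⟨t, ht, htc⟩ := ih (S.erase x) (erase_ssubset hxS)
      (by rw [card_erase_of_mem hxS]; omega) hT'ne
    rw [mem_filter] at ht
    rw [filter_erase, erase_eq_of_notMem fun h => ht.2 (mem_filter.1 h).2.symm] at htc
    exact ⟨t, ht.1, htc⟩

end SimpleGraph

section ConnectedSets

variable {V : Type*} {G : SimpleGraph V}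

lemma IsConnSub.nonempty {C : Finset V} (h : IsConnSub G C) : C.Nonempty :=
  let ⟨⟨v, hv⟩⟩ := SimpleGraph.Connected.nonempty h
  ⟨v, hv⟩

lemma isConnSub_singleton (v : V) : IsConnSub G {v} := by
  rw [IsConnSub, coe_singleton]
  exact ⟨.of_subsingleton⟩

lemma IsConnSub.union [DecidableEq V] {C D : Finset V} (hC : IsConnSub G C) (hD : IsConnSub G D)
    (h : (C ∩ D).Nonempty) : IsConnSub G (C ∪ D) := by
  rw [IsConnSub, coe_union]
  exact SimpleGraph.induce_union_connected hC.preconnected hD.preconnected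
    (by exact_mod_cast h)

lemma IsConnSub.union_of_adj [DecidableEq V] {C D : Finset V} (hC : IsConnSub G C)
    (hD : IsConnSub G D) {c d : V} (hc : c ∈ C) (hd : d ∈ D) (h : G.Adj c d) :
    IsConnSub G (C ∪ D) := by
  rw [IsConnSub, coe_union]
  exact SimpleGraph.connected_induce_union hC.preconnected hD.preconnected hc hd h

lemma IsConnSub.exists_adj_of_ssubset {C D : Finset V} (hD : IsConnSub G D) (hCD : C ⊂ D)
    (hC : C.Nonempty) : ∃ u ∈ C, ∃ w ∈ D, w ∉ C ∧ G.Adj u w := by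
  obtain ⟨p, hp⟩ := hC
  obtain ⟨q, hqD, hqC⟩ := exists_of_ssubset hCD
  obtain ⟨walk⟩ := hD.preconnected ⟨p, hCD.subset hp⟩ ⟨q, hqD⟩
  obtain ⟨d, -, hd₁, hd₂⟩ := walk.exists_boundary_dart {x | x.1 ∈ C} hp hqC
  exact ⟨_, hd₁, _, d.snd.2, hd₂, d.adj⟩

end ConnectedSets

section Components

variable {V : Type*} [Fintype V] [DecidableEq V] {G : SimpleGraph V}

lemma mem_comps_iff {C U : Finset V} : C ∈ comps G U ↔ C ⊆ U ∧ IsConnSub G C ∧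
    ∀ D : Finset V, C ⊆ D → D ⊆ U → IsConnSub G D → D = C := by
  simp [comps]

lemma not_isConnSub_union_of_mem_comps {U C D : Finset V} (hC : C ∈ comps G U)
    (hD : D ∈ comps G U) (hCD : C ≠ D) : ¬ IsConnSub G (C ∪ D) := fun h => by
  obtain ⟨hCU, -, hCmax⟩ := mem_comps_iff.1 hC
  obtain ⟨hDU, -, hDmax⟩ := mem_comps_iff.1 hD
  have hU : C ∪ D ⊆ U := union_subset hCU hDU
  exact hCD ((hCmax _ subset_union_left hU h).symm.trans
    (hDmax _ subset_union_right hU h))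

lemma eq_of_mem_comps_of_mem {U C D : Finset V} (hC : C ∈ comps G U) (hD : D ∈ comps G U)
    {v : V} (hvC : v ∈ C) (hvD : v ∈ D) : C = D := by
  by_contra hCD
  exact not_isConnSub_union_of_mem_comps hC hD hCD ((mem_comps_iff.1 hC).2.1.union
    (mem_comps_iff.1 hD).2.1 ⟨v, mem_inter.2 ⟨hvC, hvD⟩⟩)

lemma exists_mem_comps {U : Finset V} {v : V} (hv : v ∈ U) : ∃ C ∈ comps G U, v ∈ C := by
  obtain ⟨C, hC⟩ := exists_maximal (s := {D | v ∈ D ∧ D ⊆ U ∧ IsConnSub G D})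
    ⟨{v}, by simp [hv, isConnSub_singleton]⟩
  have hCmem : v ∈ C ∧ C ⊆ U ∧ IsConnSub G C := by simpa using hC.prop
  refine ⟨C, mem_comps_iff.2 ⟨hCmem.2.1, hCmem.2.2, fun D hCD hDU hD => ?_⟩, hCmem.1⟩
  exact (hC.eq_of_le (by simp [hCD hCmem.1, hDU, hD]) hCD).symm

lemma mem_iff_exists_mem_comps {U : Finset V} {v : V} : v ∈ U ↔ ∃ C ∈ comps G U, v ∈ C :=
  ⟨exists_mem_comps, fun ⟨_, hC, hvC⟩ => (mem_comps_iff.1 hC).1 hvC⟩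

lemma eq_of_comps_eq {U U' : Finset V} (h : comps G U = comps G U') : U = U' := by
  ext v
  rw [mem_iff_exists_mem_comps (G := G), mem_iff_exists_mem_comps (G := G), h]

lemma comps_eq_of_cover {W : Finset V} {F : Finset (Finset V)}
    (hconn : ∀ C ∈ F, IsConnSub G C)
    (hsep : ∀ C ∈ F, ∀ D ∈ F, C ≠ D → ¬ IsConnSub G (C ∪ D))
    (hcover : ∀ v, v ∈ W ↔ ∃ C ∈ F, v ∈ C) : comps G W = F := by
  have hF : ∀ C ∈ F, C ∈ comps G W := by
    intro C hC
    refine mem_comps_iff.2 ⟨fun v hv => (hcover v).2 ⟨C, hC, hv⟩, hconn C hC,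
      fun D hCD hDW hD => ?_⟩
    by_contra hne
    obtain ⟨u, huC, w, hwD, hwC, huw⟩ :=
      hD.exists_adj_of_ssubset (hCD.ssubset_of_ne (Ne.symm hne)) (hconn C hC).nonempty
    obtain ⟨C', hC', hwC'⟩ := (hcover w).1 (hDW hwD)
    exact hsep C hC C' hC' (by rintro rfl; exact hwC hwC')
      ((hconn C hC).union_of_adj (hconn C' hC') huC hwC' huw)
  ext E
  refine ⟨fun hE => ?_, hF E⟩
  obtain ⟨hEW, hE', -⟩ := mem_comps_iff.1 hE
  obtain ⟨v, hv⟩ := hE'.nonempty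
  obtain ⟨C, hC, hvC⟩ := (hcover v).1 (hEW hv)
  rwa [eq_of_mem_comps_of_mem hE (hF C hC) hv hvC]

end Components

section Jump

variable {V : Type*} [Fintype V] [DecidableEq V] {G : SimpleGraph V} {U a b : Finset V}

lemma comps_jump (ha : a ∈ comps G U) (hb : IsConnSub G b)
    (hsep : ∀ C ∈ comps G U, C ≠ a → ¬ IsConnSub G (b ∪ C)) :
    comps G (U \ a ∪ b) = insert b ((comps G U).erase a) := by
  refine comps_eq_of_cover ?_ ?_ fun v => ?_
  · simp only [mem_insert, mem_erase]
    rintro C (rfl | ⟨-, hC⟩)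
    exacts [hb, (mem_comps_iff.1 hC).2.1]
  · intro C hC D hD hCD
    rw [mem_insert, mem_erase] at hC hD
    rcases hC with rfl | ⟨hCa, hC⟩ <;> rcases hD with rfl | ⟨hDa, hD⟩
    · exact absurd rfl hCD
    · exact hsep D hD hDa
    · rw [union_comm]
      exact hsep C hC hCa
    · exact not_isConnSub_union_of_mem_comps hC hD hCD
  · rw [mem_union, mem_sdiff, exists_mem_insert, or_comm]
    refine or_congr_right ⟨fun ⟨hvU, hva⟩ => ?_, fun ⟨C, hC, hvC⟩ => ?_⟩
    · obtain ⟨C, hC, hvC⟩ := exists_mem_comps hvU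
      exact ⟨C, mem_erase.2 ⟨by rintro rfl; exact hva hvC, hC⟩, hvC⟩
    · obtain ⟨hCa, hC⟩ := mem_erase.1 hC
      exact ⟨(mem_comps_iff.1 hC).1 hvC, fun hva => hCa (eq_of_mem_comps_of_mem hC ha hvC hva)⟩

lemma adjCJ_jump (ha : a ∈ comps G U) (hb : IsConnSub G b) (hab : a ≠ b) (hcard : #a = #b)
    (hsep : ∀ C ∈ comps G U, C ≠ a → ¬ IsConnSub G (b ∪ C)) :
    adjCJ G U (U \ a ∪ b) := by
  have hbU : b ∉ comps G U := fun hbU => hsep b hbU hab.symm (by rwa [union_self])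
  have hbU' : b ∉ (comps G U).erase a := fun h => hbU (mem_of_mem_erase h)
  have hval : (comps G U).val = a ::ₘ ((comps G U).erase a).val := by
    rw [← insert_val_of_notMem (notMem_erase a _), insert_erase ha]
  refine ⟨?_, card_eq_one.2 ⟨a, ?_⟩, card_eq_one.2 ⟨b, ?_⟩⟩ <;>
    simp only [ccMultiset, comps_jump ha hb hsep]
  · rw [hval, insert_val_of_notMem hbU', Multiset.map_cons, Multiset.map_cons, hcard]
  · ext C
    simp only [mem_sdiff, mem_insert, mem_erase, mem_singleton]
    constructor
    · rintro ⟨hC, hC'⟩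
      by_contra hCa
      exact hC' (Or.inr ⟨hCa, hC⟩)
    · rintro rfl
      refine ⟨ha, ?_⟩
      rintro (h | ⟨h, -⟩)
      exacts [hab h, h rfl]
  · ext C
    simp only [mem_sdiff, mem_insert, mem_erase, mem_singleton]
    constructor
    · rintro ⟨rfl | ⟨-, hC⟩, hC'⟩
      exacts [rfl, absurd hC hC']
    · rintro rfl
      exact ⟨Or.inl rfl, hbU⟩

end Jump

section Reconfiguration

variable {V : Type*} [Fintype V] [DecidableEq V] {G : SimpleGraph V} {A B : Finset V}

noncomputable def ccPiranColoring (G : SimpleGraph V) (A B : Finset V) :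
    (ccPiran G A B).Coloring Bool :=
  .mk (fun C => decide (C.1 ∈ comps G A \ comps G B)) <| by
    rintro C D ⟨h | h, -⟩ <;> simp_all

lemma exists_card_touching_le_one (hehf : (ccPiran G A B).EvenHoleFree)
    {SA SB : Finset (Finset V)} (hSA : SA ⊆ comps G A \ comps G B)
    (hSB : SB ⊆ comps G B \ comps G A) (hcard : #SA ≤ #SB) (hne : SB.Nonempty) :
    ∃ b ∈ SB, #{a ∈ SA | IsConnSub G (b ∪ a)} ≤ 1 := by
  have hSAv : ∀ a ∈ SA, a ∈ ccPiranVerts G A B := fun a ha => mem_union_left _ (hSA ha)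
  have hSBv : ∀ b ∈ SB, b ∈ ccPiranVerts G A B := fun b hb => mem_union_right _ (hSB hb)
  obtain ⟨t, ht, htS⟩ := SimpleGraph.exists_mem_card_adj_le_one_of_card_le
    (fun _ => hehf.exists_card_adj_le_one (ccPiranColoring G A B))
    (S := SA.subtype (· ∈ ccPiranVerts G A B)) (T := SB.subtype (· ∈ ccPiranVerts G A B))
    (by rwa [card_subtype, card_subtype, filter_true_of_mem hSAv, filter_true_of_mem hSBv])
    (by rwa [← map_nonempty, subtype_map_of_mem hSBv])
  refine ⟨t, mem_subtype.1 ht, le_trans ?_ ((card_map (.subtype _)).trans_le htS)⟩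
  refine card_le_card fun a ha => ?_
  rw [mem_filter] at ha
  refine mem_map.2 ⟨⟨a, hSAv a ha.1⟩, mem_filter.2 ⟨mem_subtype.2 ha.1, ?_⟩, rfl⟩
  exact ⟨Or.inr ⟨hSA ha.1, hSB (mem_subtype.1 ht)⟩, ha.2⟩

lemma card_comps_sdiff_le {ℓ : ℕ} {W : ℕ → Finset V} (h : ∀ i < ℓ, adjCJ G (W i) (W (i + 1))) :
    #(comps G (W 0) \ comps G (W ℓ)) ≤ ℓ := by
  induction ℓ with
  | zero => simp
  | succ ℓ ih =>
    calc #(comps G (W 0) \ comps G (W (ℓ + 1)))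
        ≤ #(comps G (W 0) \ comps G (W ℓ)) + #(comps G (W ℓ) \ comps G (W (ℓ + 1))) :=
          (card_le_card (sdiff_triangle _ _ _)).trans (card_union_le _ _)
      _ ≤ ℓ + 1 := by
          rw [(h ℓ (by omega)).2.1]
          exact Nat.add_le_add_right (ih fun i hi => h i (by omega)) 1

lemma ccMultiset_eq_of_adjCJ {ℓ : ℕ} {W : ℕ → Finset V}
    (h : ∀ i < ℓ, adjCJ G (W i) (W (i + 1))) : ∀ i ≤ ℓ, ccMultiset G (W i) = ccMultiset G (W 0)
  | 0, _ => rfl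
  | i + 1, hi => (h i (by omega)).1.symm.trans (ccMultiset_eq_of_adjCJ h i (by omega))

lemma exists_adjCJ_seq (hehf : (ccPiran G A B).EvenHoleFree)
    (hcard : ∀ a ∈ comps G A, ∀ b ∈ comps G B, #a = #b) (n : ℕ) :
    ∀ {SA SB : Finset (Finset V)}, SA ⊆ comps G A \ comps G B → SB ⊆ comps G B \ comps G A →
      #SA = n → #SB = n → ∀ {U : Finset V}, comps G U = comps G B \ SB ∪ SA →
      ∃ W : ℕ → Finset V, W 0 = U ∧ W n = B ∧ ∀ i < n, adjCJ G (W i) (W (i + 1)) := by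
  induction n with
  | zero =>
    intro SA SB _ _ hSA hSB U hU
    rw [card_eq_zero.1 hSA, card_eq_zero.1 hSB, sdiff_empty, union_empty] at hU
    exact ⟨fun _ => B, eq_of_comps_eq hU.symm, rfl, by simp⟩
  | succ n ih =>
    intro SA SB hSAK hSBK hSA hSB U hU
    obtain ⟨b, hbSB, hb⟩ := exists_card_touching_le_one hehf hSAK hSBK (by omega)
      (card_pos.1 (by omega))
    obtain ⟨a, haSA, ha⟩ := exists_mem_forall_ne_not_of_card_filter_le_one
      (card_pos.1 (show 0 < #SA by omega)) hb
    obtain ⟨haA, haB⟩ := mem_sdiff.1 (hSAK haSA)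
    obtain ⟨hbB, hbA⟩ := mem_sdiff.1 (hSBK hbSB)
    have hab : a ≠ b := by rintro rfl; exact hbA haA
    have hsep : ∀ C ∈ comps G U, C ≠ a → ¬ IsConnSub G (b ∪ C) := by
      intro C hC hCa
      rcases mem_union.1 (hU ▸ hC) with hC | hC
      · exact not_isConnSub_union_of_mem_comps hbB (mem_sdiff.1 hC).1
          (by rintro rfl; exact (mem_sdiff.1 hC).2 hbSB)
      · exact ha C hC hCa
    have haU : a ∈ comps G U := hU ▸ mem_union_right _ haSA
    have hU' : comps G (U \ a ∪ b) = comps G B \ SB.erase b ∪ SA.erase a := by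
      rw [comps_jump haU (mem_comps_iff.1 hbB).2.1 hsep, hU]
      ext C
      simp only [mem_insert, mem_erase, mem_union, mem_sdiff]
      grind
    exact exists_seq_cons (adjCJ_jump haU (mem_comps_iff.1 hbB).2.1 hab (hcard a haA b hbB) hsep)
      (ih ((erase_subset a SA).trans hSAK) ((erase_subset b SB).trans hSBK)
        (by rw [card_erase_of_mem haSA, hSA]; rfl) (by rw [card_erase_of_mem hbSB, hSB]; rfl) hU')

end Reconfiguration

/-- If all connected components of `A` and `B` have the same size `s`
and the CC-Piran graph `Π^cc(A, B)` is even-hole-free, then `A` and `B` are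
reconfigurable under CJ, with a shortest reconfiguration sequence of length exactly
`|C(A) \ C(B)|`. -/
theorem stmt13 {V : Type*} [Fintype V] [DecidableEq V] (G : SimpleGraph V)
    (A B : Finset V) (s : ℕ)
    (hm : ccMultiset G A = ccMultiset G B)
    (hsA : ∀ C ∈ comps G A, C.card = s) (hsB : ∀ C ∈ comps G B, C.card = s)
    (hehf : ∀ ℓ : ℕ, 4 ≤ ℓ → Even ℓ →
      IsEmpty (SimpleGraph.cycleGraph ℓ ↪g ccPiran G A B)) :
    (∃ W : ℕ → Finset V, W 0 = A ∧ W ((comps G A \ comps G B).card) = B ∧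
      (∀ i ≤ (comps G A \ comps G B).card, ccMultiset G (W i) = ccMultiset G A) ∧
      ∀ i < (comps G A \ comps G B).card, adjCJ G (W i) (W (i + 1))) ∧
    (∀ (ℓ : ℕ) (W : ℕ → Finset V), W 0 = A → W ℓ = B →
      (∀ i ≤ ℓ, ccMultiset G (W i) = ccMultiset G A) →
      (∀ i < ℓ, adjCJ G (W i) (W (i + 1))) →
      (comps G A \ comps G B).card ≤ ℓ) := by
  have hKAB : #(comps G A \ comps G B) = #(comps G B \ comps G A) := by
    simpa [card_sdiff_eq_card_sdiff_iff, ccMultiset] using congrArg Multiset.card hm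
  have hA : comps G A = comps G B \ (comps G B \ comps G A) ∪ (comps G A \ comps G B) := by
    ext C
    simp only [mem_union, mem_sdiff]
    tauto
  obtain ⟨W, hW0, hWn, hW⟩ := exists_adjCJ_seq hehf
    (fun a ha b hb => (hsA a ha).trans (hsB b hb).symm) _ subset_rfl subset_rfl rfl hKAB.symm hA
  refine ⟨⟨W, hW0, hWn, fun i hi => hW0 ▸ ccMultiset_eq_of_adjCJ hW i hi, hW⟩, ?_⟩
  intro ℓ W' hW'0 hW'ℓ _ hW'
  simpa only [hW'0, hW'ℓ] using card_comps_sdiff_le hW'
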